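/- arXiv:1011.3317 — 3 statements merged into one kernel-verified Lean document; each statement's English description precedes it below -/
import Mathlib

section
/- Let n ≥ 1. The action of Sp(n,ℝ)_* on the Siegel disk 𝔇_n is transitive: for every W ∈ 𝔇_n there exists ω = [[p, q],[conj(q), conj(p)]] ∈ Sp(n,ℝ)_* such that (p·0 + q)·(conj(q)·0 + conj(p))^{-1} = q·conj(p)^{-1} = W. -/
/-!
For `W` in the disk, `B = 1 - conj W * W` is the entrywise conjugate of `1 - W * conj W`, hence
positive definite. With `S = B ^ (-1/2)` (hermitian, `S * B * S = 1`), the blocks `p = conj S`,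
`q = W * S` satisfy the `Sp(n,ℝ)_*` relations, and `q * (conj p)⁻¹ = W * S * S⁻¹ = W`.
-/

open Matrix
open scoped ComplexOrder

/-- Entrywise complex conjugate of a matrix. -/
def cm {n : ℕ} (W : Matrix (Fin n) (Fin n) ℂ) : Matrix (Fin n) (Fin n) ℂ :=
  W.map (starRingEnd ℂ)

/-- The Siegel disk `𝔇_n`: symmetric complex matrices with `1 - W ⬝ conj W` positive definite. -/
def SiegelDisk (n : ℕ) : Set (Matrix (Fin n) (Fin n) ℂ) :=
  {W | W.IsSymm ∧ (1 - W * cm W).PosDef}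

/-- The defining relations of `Sp(n,ℝ)_*` for the blocks `p`, `q` of
`ω = [[p, q],[conj q, conj p]]`. -/
def SpStarRel {n : ℕ} (p q : Matrix (Fin n) (Fin n) ℂ) : Prop :=
  pᵀ * cm p - (cm q)ᵀ * q = 1 ∧ pᵀ * cm q = (cm q)ᵀ * p

theorem Matrix.PosDef.exists_isHermitian_isUnit_mul_mul_eq_one {m 𝕜 : Type*} [Fintype m]
    [DecidableEq m] [RCLike 𝕜] {A : Matrix m m 𝕜} (hA : A.PosDef) :
    ∃ S : Matrix m m 𝕜, S.IsHermitian ∧ IsUnit S ∧ S * A * S = 1 := by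
  open scoped MatrixOrder in
  obtain ⟨R, hR_nonneg, hRR⟩ : ∃ R : Matrix m m 𝕜, 0 ≤ R ∧ R * R = A :=
    ⟨CFC.sqrt A, CFC.sqrt_nonneg A, CFC.sqrt_mul_sqrt_self A hA.posSemidef.nonneg⟩
  have hR : IsUnit R := isUnit_of_mul_isUnit_left (hRR ▸ hA.isUnit)
  refine ⟨R⁻¹, hR_nonneg.posSemidef.isHermitian.inv, isUnit_nonsing_inv_iff.2 hR, ?_⟩
  have hdet := (isUnit_iff_isUnit_det R).1 hR
  rw [← hRR, mul_assoc, mul_assoc, mul_nonsing_inv _ hdet, mul_one, nonsing_inv_mul _ hdet]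

section Conj

variable {n : ℕ}

theorem cm_eq_conjTranspose_transpose (A : Matrix (Fin n) (Fin n) ℂ) : cm A = Aᴴᵀ := rfl

@[simp]
theorem cm_cm (A : Matrix (Fin n) (Fin n) ℂ) : cm (cm A) = A := by
  ext; simp [cm]

theorem cm_mul (A B : Matrix (Fin n) (Fin n) ℂ) : cm (A * B) = cm A * cm B :=
  Matrix.map_mul

theorem cm_transpose (A : Matrix (Fin n) (Fin n) ℂ) : cm Aᵀ = (cm A)ᵀ := rfl

theorem Matrix.IsHermitian.cm_eq_transpose {A : Matrix (Fin n) (Fin n) ℂ} (hA : A.IsHermitian) :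
    cm A = Aᵀ := by
  rw [cm_eq_conjTranspose_transpose, hA.eq]

theorem Matrix.PosDef.cm {A : Matrix (Fin n) (Fin n) ℂ} (hA : A.PosDef) : (cm A).PosDef :=
  hA.isHermitian.cm_eq_transpose ▸ hA.transpose

end Conj

theorem posDef_one_sub_cm_mul_of_mem_siegelDisk {n : ℕ} {W : Matrix (Fin n) (Fin n) ℂ}
    (hW : W ∈ SiegelDisk n) : (1 - cm W * W).PosDef := by
  have h : cm (1 - W * cm W) = 1 - cm W * W := by
    simp [cm, Matrix.map_sub, Matrix.map_mul, Function.comp_def]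
  exact h ▸ hW.2.cm

theorem spStarRel_cm_mul {n : ℕ} {W S : Matrix (Fin n) (Fin n) ℂ} (hW : W.IsSymm)
    (hS : S.IsHermitian) (hSBS : S * (1 - cm W * W) * S = 1) : SpStarRel (cm S) (W * S) := by
  rw [SpStarRel, cm_cm, cm_mul, hS.cm_eq_transpose, transpose_transpose, transpose_mul,
    transpose_transpose, ← cm_transpose, hW.eq]
  refine ⟨?_, by simp only [mul_assoc]⟩
  rw [← hSBS]
  noncomm_ring

theorem stmt1_general (n : ℕ) :
    ∀ W ∈ SiegelDisk n, ∃ p q : Matrix (Fin n) (Fin n) ℂ,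
      SpStarRel p q ∧ IsUnit (cm p) ∧
      (p * 0 + q) * (cm q * 0 + cm p)⁻¹ = W ∧ q * (cm p)⁻¹ = W := by
  intro W hW
  obtain ⟨S, hS, hS_unit, hSBS⟩ :=
    (posDef_one_sub_cm_mul_of_mem_siegelDisk hW).exists_isHermitian_isUnit_mul_mul_eq_one
  have hWS : W * S * S⁻¹ = W :=
    mul_nonsing_inv_cancel_right _ _ ((isUnit_iff_isUnit_det S).1 hS_unit)
  refine ⟨cm S, W * S, spStarRel_cm_mul hW.1 hS hSBS, ?_, ?_, ?_⟩ <;> simpa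

/-- Transitivity of the `Sp(n,ℝ)_*` action: every `W ∈ 𝔇_n` is in the orbit of `0`,
i.e. `W = (p·0 + q)(conj q·0 + conj p)⁻¹ = q (conj p)⁻¹` for some `ω ∈ Sp(n,ℝ)_*`. -/
theorem stmt1 (n : ℕ) (hn : 1 ≤ n) :
    ∀ W ∈ SiegelDisk n, ∃ p q : Matrix (Fin n) (Fin n) ℂ,
      SpStarRel p q ∧ IsUnit (cm p) ∧
      (p * 0 + q) * (cm q * 0 + cm p)⁻¹ = W ∧ q * (cm p)⁻¹ = W :=
  stmt1_general n
end

section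
/- For every W ∈ 𝔇_n, the matrix I_n − W is invertible and Ω := i(I_n + W)(I_n − W)^{-1} belongs to the Siegel upper half space ℌ_n, i.e. Ω is symmetric and Im Ω is positive definite. -/
open Matrix
open scoped ComplexOrder

/-- Entrywise imaginary part of a complex matrix, as a real matrix. -/
def imM {n : ℕ} (Ω : Matrix (Fin n) (Fin n) ℂ) : Matrix (Fin n) (Fin n) ℝ :=
  Matrix.of fun i j => (Ω i j).im

/-- The Siegel upper half space `ℌ_n`: symmetric matrices with positive definite
imaginary part. -/
def SiegelHalf (n : ℕ) : Set (Matrix (Fin n) (Fin n) ℂ) :=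
  {Ω | Ω.IsSymm ∧ (imM Ω).PosDef}

/-!
Put `A = (I - W)⁻¹` and `M = (I + W) A`. In any star ring, `(I - W) A = I` gives the Cayley
identity `M + Mᴴ = 2 Aᴴ (I - Wᴴ W) A`. For symmetric `W` we have `W̄ = Wᴴ`, so transposing the
Siegel-disk condition says that `I - Wᴴ W` is positive definite. Then `I - W` is invertible, since a
fixed vector `v` of `W` would give `vᴴ (I - Wᴴ W) v = 0`; `M = 2A - I` is symmetric; and for
symmetric `M` the real matrix `Im (i M) = Re M` complexifies to `(M + Mᴴ) / 2`, a congruence of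
`I - Wᴴ W`.
-/

theorem cayley_add_star {R : Type*} [Ring R] [StarRing R] {W A : R} (hA : (1 - W) * A = 1) :
    (1 + W) * A + star ((1 + W) * A) = 2 • (star A * (1 - star W * W) * A) := by
  have hA' : star A * (1 - star W) = 1 := by simpa using congrArg star hA
  calc (1 + W) * A + star ((1 + W) * A)
      = star A * (1 - star W) * ((1 + W) * A) + star A * (1 + star W) * ((1 - W) * A) := by
        rw [hA', hA, star_mul, star_add, star_one]; simp
    _ = 2 • (star A * (1 - star W * W) * A) := by noncomm_ring

namespace Matrix

variable {ι : Type*} [Fintype ι]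

theorem posDef_of_posDef_map_ofReal {M : Matrix ι ι ℝ} (hM : (M.map ((↑) : ℝ → ℂ)).PosDef) :
    M.PosDef := by
  refine PosDef.of_dotProduct_mulVec_pos ?_ fun x hx => ?_
  · ext i j
    simpa using congr_fun₂ hM.1 i j
  · have hx' : Complex.ofReal ∘ x ≠ 0 := fun h0 =>
      hx <| funext fun i => Complex.ofReal_eq_zero.mp (congr_fun h0 i)
    have hpos := hM.dotProduct_mulVec_pos hx'
    have hcast : star (Complex.ofReal ∘ x) ⬝ᵥ (M.map Complex.ofReal *ᵥ (Complex.ofReal ∘ x)) =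
        ((star x ⬝ᵥ (M *ᵥ x) : ℝ) : ℂ) := by
      simp [dotProduct, mulVec]
    exact Complex.zero_lt_real.mp (hcast ▸ hpos)

variable [DecidableEq ι]

theorem isUnit_one_sub_of_posDef_one_sub_conjTranspose_mul {K : Type*} [Field K] [PartialOrder K]
    [StarRing K] {W : Matrix ι ι K} (hW : (1 - Wᴴ * W).PosDef) : IsUnit (1 - W) := by
  by_contra h
  obtain ⟨v, hv, hWv⟩ : ∃ v ≠ 0, W *ᵥ v = v := by
    obtain ⟨a, b, hab, hne⟩ :=
      Function.not_injective_iff.mp <| mulVec_injective_iff_isUnit.not.mpr h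
    refine ⟨a - b, sub_ne_zero.mpr hne, ?_⟩
    rw [sub_mulVec, sub_mulVec, one_mulVec, one_mulVec] at hab
    rw [mulVec_sub]
    linear_combination -hab
  have hpos := hW.dotProduct_mulVec_pos hv
  rw [sub_mulVec, one_mulVec, ← mulVec_mulVec, dotProduct_sub, dotProduct_mulVec, ← star_mulVec,
    hWv, sub_self] at hpos
  exact hpos.false

theorem isSymm_one_add_mul_nonsing_inv_one_sub {R : Type*} [CommRing R] {W : Matrix ι ι R}
    (hW : W.IsSymm) (hU : IsUnit (1 - W)) : ((1 + W) * (1 - W)⁻¹).IsSymm := by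
  have hsub : (1 - W).IsSymm := isSymm_one.sub hW
  have h : (1 + W) * (1 - W)⁻¹ = (2 : R) • (1 - W)⁻¹ - 1 := by
    rw [show 1 + W = (2 : R) • 1 - (1 - W) by module, sub_mul, smul_mul_assoc, one_mul,
      mul_nonsing_inv _ ((isUnit_iff_isUnit_det _).mp hU)]
  rw [h]
  exact (hsub.inv.smul _).sub isSymm_one

end Matrix

theorem Matrix.IsSymm.conjTranspose_eq_cm {n : ℕ} {W : Matrix (Fin n) (Fin n) ℂ} (hW : W.IsSymm) :
    Wᴴ = cm W := by
  ext i j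
  simp [cm, hW.apply]

theorem posDef_one_sub_conjTranspose_mul_of_mem_siegelDisk {n : ℕ} {W : Matrix (Fin n) (Fin n) ℂ}
    (hW : W ∈ SiegelDisk n) : (1 - Wᴴ * W).PosDef := by
  obtain ⟨hsym, hpd⟩ := hW
  have := hpd.transpose
  have hcm : (cm W).IsSymm := hsym.map _
  rwa [transpose_sub, transpose_one, transpose_mul, hsym.eq, hcm.eq,
    ← hsym.conjTranspose_eq_cm] at this

theorem map_ofReal_imM_I_smul {n : ℕ} {M : Matrix (Fin n) (Fin n) ℂ} (hM : M.IsSymm) :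
    (imM (Complex.I • M)).map ((↑) : ℝ → ℂ) = (2 : ℂ)⁻¹ • (M + Mᴴ) := by
  ext i j
  simp [imM, hM.apply, Complex.ext_iff]
  ring

theorem posDef_imM_I_smul {n : ℕ} {M : Matrix (Fin n) (Fin n) ℂ} (hM : M.IsSymm)
    (h : (M + Mᴴ).PosDef) : (imM (Complex.I • M)).PosDef := by
  apply posDef_of_posDef_map_ofReal
  rw [map_ofReal_imM_I_smul hM]
  exact h.smul (by norm_num)

/-- For `W ∈ 𝔇_n`, `I − W` is invertible and `Ω = i(I+W)(I−W)⁻¹ ∈ ℌ_n`. -/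
theorem stmt4 (n : ℕ) (W : Matrix (Fin n) (Fin n) ℂ) (hW : W ∈ SiegelDisk n) :
    IsUnit (1 - W) ∧ Complex.I • ((1 + W) * (1 - W)⁻¹) ∈ SiegelHalf n := by
  have hpd := posDef_one_sub_conjTranspose_mul_of_mem_siegelDisk hW
  have hU := isUnit_one_sub_of_posDef_one_sub_conjTranspose_mul hpd
  have hsymm := isSymm_one_add_mul_nonsing_inv_one_sub hW.1 hU
  refine ⟨hU, hsymm.smul _, posDef_imM_I_smul hsymm ?_⟩
  have hinv : (1 - W) * (1 - W)⁻¹ = 1 := mul_nonsing_inv _ ((isUnit_iff_isUnit_det _).mp hU)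
  rw [← star_eq_conjTranspose, cayley_add_star hinv, two_nsmul]
  have hconj := (IsUnit.posDef_star_left_conjugate_iff (isUnit_nonsing_inv_iff.mpr hU)).mpr hpd
  exact hconj.add hconj
end

section
/- The partial Cayley transform φ(W,z) = (i(I_n + W)(I_n − W)^{-1}, 2i·z·(I_n − W)^{-1}) is a well-defined bijection from 𝔇_n × ℂⁿ onto ℌ_n × ℂⁿ, with inverse given by Ω ↦ W = (Ω − iI_n)(Ω + iI_n)^{-1} and ζ ↦ z = ζ·(Ω + iI_n)^{-1}; in particular, for every Ω ∈ ℌ_n the matrix Ω + iI_n is invertible and (Ω − iI_n)(Ω + iI_n)^{-1} ∈ 𝔇_n, and the two maps are mutually inverse. -/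
open Matrix
open scoped ComplexOrder

/-- The partial Cayley transform
`φ(W,z) = (i(I+W)(I−W)⁻¹, 2i·z·(I−W)⁻¹)` on `𝔇_n × ℂⁿ` (rows as `Fin n → ℂ`). -/
noncomputable def cayley {n : ℕ} (x : Matrix (Fin n) (Fin n) ℂ × (Fin n → ℂ)) :
    Matrix (Fin n) (Fin n) ℂ × (Fin n → ℂ) :=
  (Complex.I • ((1 + x.1) * (1 - x.1)⁻¹), (2 * Complex.I) • (x.2 ᵥ* (1 - x.1)⁻¹))

/-- The inverse partial Cayley transform
`(Ω,ζ) ↦ ((Ω − iI)(Ω + iI)⁻¹, ζ·(Ω + iI)⁻¹)` on `ℌ_n × ℂⁿ`. -/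
noncomputable def cayleyInv {n : ℕ} (y : Matrix (Fin n) (Fin n) ℂ × (Fin n → ℂ)) :
    Matrix (Fin n) (Fin n) ℂ × (Fin n → ℂ) :=
  ((y.1 - Complex.I • (1 : Matrix (Fin n) (Fin n) ℂ)) *
      (y.1 + Complex.I • (1 : Matrix (Fin n) (Fin n) ℂ))⁻¹,
    y.2 ᵥ* (y.1 + Complex.I • (1 : Matrix (Fin n) (Fin n) ℂ))⁻¹)

/-!
Both maps are Möbius transformations tied by one relation, `Ω = 2i (1 - W)⁻¹ - i`, equivalently
`W = 1 - 2i (Ω + i)⁻¹`; this makes the two round trips immediate. With `N = 1 - W` one has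
`1 - Wᴴ W = N + Nᴴ - Nᴴ N` and `Im Ω = N⁻¹ + N⁻¹ᴴ - 1 = N⁻¹ᴴ (N + Nᴴ - Nᴴ N) N⁻¹`, so the disk and
half-space conditions are congruent, while symmetry passes through inverses. The matrices
`1 - W` and `Ω + i` are invertible because a kernel vector would make the relevant positive
definite form vanish.
-/

open ComplexStarModule Complex

theorem Complex.two_mul_I_ne_zero : 2 * I ≠ 0 := mul_ne_zero two_ne_zero I_ne_zero

namespace Matrix

variable {ι : Type*} [Fintype ι] [DecidableEq ι]

open scoped MatrixOrder in
theorem posDef_map_ofReal_iff {A : Matrix ι ι ℝ} :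
    (A.map ((↑) : ℝ → ℂ)).PosDef ↔ A.PosDef := by
  have hstar : Function.Semiconj ((↑) : ℝ → ℂ) star star := fun x => (conj_ofReal x).symm
  constructor
  · intro h
    refine .of_dotProduct_mulVec_pos ?_ fun x hx => ?_
    · exact map_injective ofReal_injective ((conjTranspose_map _ hstar).trans h.isHermitian.eq)
    · have hx' : ((↑) : ℝ → ℂ) ∘ x ≠ 0 := fun h0 =>
        hx (funext fun i => ofReal_injective (congrFun h0 i))
      have key : star (((↑) : ℝ → ℂ) ∘ x) ⬝ᵥ A.map (↑) *ᵥ (((↑) : ℝ → ℂ) ∘ x)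
          = ((star x ⬝ᵥ A *ᵥ x : ℝ) : ℂ) := by
        simp only [← ofRealHom_eq_coe, RingHom.map_dotProduct]
        congr 1
        · ext i; simp
        · ext i; exact (ofRealHom.map_mulVec A x i).symm
      simpa only [key, zero_lt_real] using h.dotProduct_mulVec_pos hx'
  · intro h
    -- `A = Bᵀ B` makes the complexification positive semidefinite, and it is invertible.
    obtain ⟨B, rfl⟩ := CStarAlgebra.nonneg_iff_eq_star_mul_self.mp h.posSemidef.nonneg
    have hmap : (star B * B).map ((↑) : ℝ → ℂ) = (B.map (↑))ᴴ * B.map (↑) := by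
      rw [← conjTranspose_map _ hstar, ← star_eq_conjTranspose]
      exact Matrix.map_mul (f := ofRealHom)
    rw [hmap, (posSemidef_conjTranspose_mul_self _).posDef_iff_isUnit, ← hmap,
      isUnit_iff_isUnit_det]
    have := ((isUnit_iff_isUnit_det _).mp h.isUnit).map ofRealHom
    rwa [RingHom.map_det] at this

theorem isUnit_one_sub_of_posDef_one_sub_conjTranspose_mul_self {W : Matrix ι ι ℂ}
    (hW : (1 - Wᴴ * W).PosDef) : IsUnit (1 - W) := by
  rw [isUnit_iff_isUnit_det, isUnit_iff_ne_zero]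
  intro hdet
  obtain ⟨v, hv, hWv⟩ := exists_mulVec_eq_zero_iff.mpr hdet
  rw [sub_mulVec, one_mulVec, sub_eq_zero, eq_comm] at hWv
  have hzero : star v ⬝ᵥ (1 - Wᴴ * W) *ᵥ v = 0 := by
    rw [sub_mulVec, one_mulVec, ← mulVec_mulVec, hWv, dotProduct_sub, dotProduct_mulVec,
      ← star_mulVec, hWv, sub_self]
  exact (hW.dotProduct_mulVec_pos hv).ne' hzero

theorem isUnit_of_posDef_imaginaryPart {A : Matrix ι ι ℂ} (hA : (ℑ A : Matrix ι ι ℂ).PosDef) :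
    IsUnit A := by
  rw [isUnit_iff_isUnit_det, isUnit_iff_ne_zero]
  intro hdet
  obtain ⟨v, hv, hAv⟩ := exists_mulVec_eq_zero_iff.mpr hdet
  have hzero : star v ⬝ᵥ (ℑ A : Matrix ι ι ℂ) *ᵥ v = 0 := by
    rw [imaginaryPart_apply_coe, smul_mulVec, smul_mulVec, sub_mulVec, hAv, dotProduct_smul,
      dotProduct_smul, dotProduct_sub, dotProduct_mulVec (star v) (star A), star_eq_conjTranspose,
      ← star_mulVec, hAv]
    simp
  exact (hA.dotProduct_mulVec_pos hv).ne' hzero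

theorem posDef_imaginaryPart_add_I_smul_one {Ω : Matrix ι ι ℂ}
    (hΩ : (ℑ Ω : Matrix ι ι ℂ).PosDef) : (ℑ (Ω + I • 1) : Matrix ι ι ℂ).PosDef := by
  rw [map_add, imaginaryPart_I_smul, realPart_one]
  exact hΩ.add PosDef.one

theorem coe_imaginaryPart_two_I_smul_sub_I_smul_one (S : Matrix ι ι ℂ) :
    (ℑ ((2 * I) • S - I • 1) : Matrix ι ι ℂ) = S + Sᴴ - 1 := by
  rw [map_sub, imaginaryPart_I_smul, realPart_one, imaginaryPart_smul]
  simp [realPart_apply_coe, star_eq_conjTranspose]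

theorem posDef_add_conjTranspose_sub_conjTranspose_mul_self_iff {N : Matrix ι ι ℂ}
    (hN : IsUnit N) : (N + Nᴴ - Nᴴ * N).PosDef ↔ (N⁻¹ + N⁻¹ᴴ - 1).PosDef := by
  have hNN : N⁻¹ * N = 1 := nonsing_inv_mul N ((isUnit_iff_isUnit_det N).mp hN)
  have hcongr : N + Nᴴ - Nᴴ * N = star N * (N⁻¹ + N⁻¹ᴴ - 1) * N :=
    calc N + Nᴴ - Nᴴ * N = (N⁻¹ * N)ᴴ * N + Nᴴ * (N⁻¹ * N) - Nᴴ * N := by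
          rw [hNN, conjTranspose_one, Matrix.mul_one, Matrix.one_mul]
      _ = star N * (N⁻¹ + N⁻¹ᴴ - 1) * N := by
          rw [conjTranspose_mul, star_eq_conjTranspose]; noncomm_ring
  rw [hcongr, hN.posDef_star_left_conjugate_iff]

theorem smul_nonsing_inv_mul_inv_smul {c : ℂ} (hc : c ≠ 0) {M : Matrix ι ι ℂ} (hM : IsUnit M) :
    (c • M⁻¹) * (c⁻¹ • M) = 1 := by
  rw [smul_mul_smul_comm, mul_inv_cancel₀ hc, nonsing_inv_mul _ ((isUnit_iff_isUnit_det M).mp hM),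
    one_smul]

theorem isUnit_smul_nonsing_inv {c : ℂ} (hc : c ≠ 0) {M : Matrix ι ι ℂ} (hM : IsUnit M) :
    IsUnit (c • M⁻¹) :=
  .of_mul_eq_one _ (smul_nonsing_inv_mul_inv_smul hc hM)

theorem inv_smul_nonsing_inv {c : ℂ} (hc : c ≠ 0) {M : Matrix ι ι ℂ} (hM : IsUnit M) :
    (c • M⁻¹)⁻¹ = c⁻¹ • M :=
  inv_eq_right_inv (smul_nonsing_inv_mul_inv_smul hc hM)

theorem posDef_one_sub_conjTranspose_mul_self_iff_posDef_imaginaryPart {W Ω : Matrix ι ι ℂ}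
    (hW : IsUnit (1 - W)) (hΩ : Ω = (2 * I) • (1 - W)⁻¹ - I • 1) :
    (1 - Wᴴ * W).PosDef ↔ (ℑ Ω : Matrix ι ι ℂ).PosDef := by
  have h : 1 - Wᴴ * W = (1 - W) + (1 - W)ᴴ - (1 - W)ᴴ * (1 - W) := by
    rw [conjTranspose_sub, conjTranspose_one]; noncomm_ring
  rw [hΩ, coe_imaginaryPart_two_I_smul_sub_I_smul_one, h,
    posDef_add_conjTranspose_sub_conjTranspose_mul_self_iff hW]

end Matrix

section Siegel

variable {n : ℕ}

theorem mem_siegelDisk_iff {W : Matrix (Fin n) (Fin n) ℂ} :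
    W ∈ SiegelDisk n ↔ W.IsSymm ∧ (1 - Wᴴ * W).PosDef := by
  refine and_congr_right fun hW => ?_
  have h : (1 - Wᴴ * W)ᵀ = 1 - W * cm W := by
    rw [transpose_sub, transpose_one, transpose_mul, hW.eq]; rfl
  rw [← h]
  exact ⟨fun hp => by simpa using hp.transpose, PosDef.transpose⟩

theorem mem_siegelHalf_iff {Ω : Matrix (Fin n) (Fin n) ℂ} :
    Ω ∈ SiegelHalf n ↔ Ω.IsSymm ∧ (ℑ Ω : Matrix (Fin n) (Fin n) ℂ).PosDef := by
  refine and_congr_right fun hΩ => ?_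
  have h : (imM Ω).map ((↑) : ℝ → ℂ) = ℑ Ω := by
    ext i j
    rw [imaginaryPart_apply_coe]
    simp only [imM, of_apply, map_apply, Matrix.smul_apply, Matrix.sub_apply, Matrix.star_apply,
      hΩ.apply, smul_eq_mul, real_smul, RCLike.star_def, sub_conj]
    push_cast
    linear_combination ((Ω i j).im : ℂ) * I_sq
  rw [← h, posDef_map_ofReal_iff]

theorem cayley_fst (x : Matrix (Fin n) (Fin n) ℂ × (Fin n → ℂ)) (hx : IsUnit (1 - x.1)) :
    (cayley x).1 = (2 * I) • (1 - x.1)⁻¹ - I • 1 := by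
  have h : (1 + x.1) * (1 - x.1)⁻¹ = (2 : ℂ) • (1 - x.1)⁻¹ - 1 :=
    calc (1 + x.1) * (1 - x.1)⁻¹ = ((2 : ℂ) • 1 - (1 - x.1)) * (1 - x.1)⁻¹ := by congr 1; module
      _ = (2 : ℂ) • (1 - x.1)⁻¹ - 1 := by
        rw [Matrix.sub_mul, mul_nonsing_inv _ ((isUnit_iff_isUnit_det _).mp hx), smul_mul_assoc,
          Matrix.one_mul]
  rw [cayley, h]
  module

theorem cayleyInv_fst (y : Matrix (Fin n) (Fin n) ℂ × (Fin n → ℂ)) (hy : IsUnit (y.1 + I • 1)) :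
    (cayleyInv y).1 = 1 - (2 * I) • (y.1 + I • 1)⁻¹ :=
  calc (y.1 - I • 1) * (y.1 + I • 1)⁻¹ = ((y.1 + I • 1) - (2 * I) • 1) * (y.1 + I • 1)⁻¹ := by
        congr 1; module
    _ = 1 - (2 * I) • (y.1 + I • 1)⁻¹ := by
        rw [Matrix.sub_mul, mul_nonsing_inv _ ((isUnit_iff_isUnit_det _).mp hy), smul_mul_assoc,
          Matrix.one_mul]

theorem cayleyInv_cayley (x : Matrix (Fin n) (Fin n) ℂ × (Fin n → ℂ)) (hx : IsUnit (1 - x.1)) :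
    cayleyInv (cayley x) = x := by
  have hP : (cayley x).1 + I • 1 = (2 * I) • (1 - x.1)⁻¹ := by rw [cayley_fst x hx]; abel
  have hPinv : ((cayley x).1 + I • 1)⁻¹ = (2 * I)⁻¹ • (1 - x.1) :=
    hP ▸ inv_smul_nonsing_inv two_mul_I_ne_zero hx
  refine Prod.ext ?_ ?_
  · rw [cayleyInv_fst _ (hP ▸ isUnit_smul_nonsing_inv two_mul_I_ne_zero hx), hPinv, smul_smul,
      mul_inv_cancel₀ two_mul_I_ne_zero, one_smul, sub_sub_cancel]
  · change (cayley x).2 ᵥ* ((cayley x).1 + I • 1)⁻¹ = x.2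
    rw [hPinv, cayley, smul_vecMul, vecMul_smul, vecMul_vecMul,
      nonsing_inv_mul _ ((isUnit_iff_isUnit_det _).mp hx), vecMul_one, smul_smul,
      mul_inv_cancel₀ two_mul_I_ne_zero, one_smul]

theorem cayley_cayleyInv (y : Matrix (Fin n) (Fin n) ℂ × (Fin n → ℂ))
    (hy : IsUnit (y.1 + I • 1)) : cayley (cayleyInv y) = y := by
  have h₁ : 1 - (cayleyInv y).1 = (2 * I) • (y.1 + I • 1)⁻¹ := by rw [cayleyInv_fst y hy]; abel
  have hinv : (1 - (cayleyInv y).1)⁻¹ = (2 * I)⁻¹ • (y.1 + I • 1) :=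
    h₁ ▸ inv_smul_nonsing_inv two_mul_I_ne_zero hy
  refine Prod.ext ?_ ?_
  · rw [cayley_fst _ (h₁ ▸ isUnit_smul_nonsing_inv two_mul_I_ne_zero hy), hinv, smul_smul,
      mul_inv_cancel₀ two_mul_I_ne_zero, one_smul, add_sub_cancel_right]
  · change (2 * I) • ((cayleyInv y).2 ᵥ* (1 - (cayleyInv y).1)⁻¹) = y.2
    rw [hinv, cayleyInv, vecMul_smul, vecMul_vecMul,
      nonsing_inv_mul _ ((isUnit_iff_isUnit_det _).mp hy), vecMul_one, smul_smul,
      mul_inv_cancel₀ two_mul_I_ne_zero, one_smul]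

theorem isUnit_one_sub_of_mem_siegelDisk {W : Matrix (Fin n) (Fin n) ℂ} (hW : W ∈ SiegelDisk n) :
    IsUnit (1 - W) :=
  isUnit_one_sub_of_posDef_one_sub_conjTranspose_mul_self (mem_siegelDisk_iff.mp hW).2

theorem isUnit_add_I_smul_one_of_mem_siegelHalf {Ω : Matrix (Fin n) (Fin n) ℂ}
    (hΩ : Ω ∈ SiegelHalf n) : IsUnit (Ω + I • 1) :=
  isUnit_of_posDef_imaginaryPart (posDef_imaginaryPart_add_I_smul_one (mem_siegelHalf_iff.mp hΩ).2)

theorem cayley_fst_mem_siegelHalf {W : Matrix (Fin n) (Fin n) ℂ} (hW : W ∈ SiegelDisk n)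
    (z : Fin n → ℂ) : (cayley (W, z)).1 ∈ SiegelHalf n := by
  have hW₁ := isUnit_one_sub_of_mem_siegelDisk hW
  rw [mem_siegelDisk_iff] at hW
  rw [mem_siegelHalf_iff, cayley_fst (W, z) hW₁,
    ← posDef_one_sub_conjTranspose_mul_self_iff_posDef_imaginaryPart hW₁ rfl]
  exact ⟨((isSymm_one.sub hW.1).inv.smul _).sub (isSymm_one.smul _), hW.2⟩

theorem cayleyInv_fst_mem_siegelDisk {Ω : Matrix (Fin n) (Fin n) ℂ} (hΩ : Ω ∈ SiegelHalf n)
    (ζ : Fin n → ℂ) : (cayleyInv (Ω, ζ)).1 ∈ SiegelDisk n := by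
  have hP := isUnit_add_I_smul_one_of_mem_siegelHalf hΩ
  rw [mem_siegelHalf_iff] at hΩ
  have h₁ : 1 - (cayleyInv (Ω, ζ)).1 = (2 * I) • (Ω + I • 1)⁻¹ := by
    rw [cayleyInv_fst (Ω, ζ) hP]; abel
  have hW₁ : IsUnit (1 - (cayleyInv (Ω, ζ)).1) := h₁ ▸ isUnit_smul_nonsing_inv two_mul_I_ne_zero hP
  have hrel : Ω = (2 * I) • (1 - (cayleyInv (Ω, ζ)).1)⁻¹ - I • 1 := by
    rw [h₁, inv_smul_nonsing_inv two_mul_I_ne_zero hP, smul_smul, mul_inv_cancel₀ two_mul_I_ne_zero,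
      one_smul, add_sub_cancel_right]
  rw [mem_siegelDisk_iff, posDef_one_sub_conjTranspose_mul_self_iff_posDef_imaginaryPart hW₁ hrel,
    cayleyInv_fst (Ω, ζ) hP]
  exact ⟨isSymm_one.sub ((hΩ.1.add (isSymm_one.smul _)).inv.smul _), hΩ.2⟩

end Siegel

/-- The partial Cayley transform is a well-defined bijection from `𝔇_n × ℂⁿ` onto
`ℌ_n × ℂⁿ`, with the indicated inverse; in particular `Ω + iI` is invertible and
`(Ω − iI)(Ω + iI)⁻¹ ∈ 𝔇_n` for `Ω ∈ ℌ_n`, and the two maps are mutually inverse. -/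
theorem stmt5 (n : ℕ) :
    (∀ W ∈ SiegelDisk n, IsUnit (1 - W) ∧
      ∀ z : Fin n → ℂ, (cayley (W, z)).1 ∈ SiegelHalf n)
    ∧ (∀ Ω ∈ SiegelHalf n,
        IsUnit (Ω + Complex.I • (1 : Matrix (Fin n) (Fin n) ℂ)) ∧
        ∀ ζ : Fin n → ℂ, (cayleyInv (Ω, ζ)).1 ∈ SiegelDisk n)
    ∧ (∀ W ∈ SiegelDisk n, ∀ z : Fin n → ℂ, cayleyInv (cayley (W, z)) = (W, z))
    ∧ (∀ Ω ∈ SiegelHalf n, ∀ ζ : Fin n → ℂ, cayley (cayleyInv (Ω, ζ)) = (Ω, ζ)) :=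
  ⟨fun _ hW => ⟨isUnit_one_sub_of_mem_siegelDisk hW, cayley_fst_mem_siegelHalf hW⟩,
    fun _ hΩ => ⟨isUnit_add_I_smul_one_of_mem_siegelHalf hΩ, cayleyInv_fst_mem_siegelDisk hΩ⟩,
    fun W hW z => cayleyInv_cayley (W, z) (isUnit_one_sub_of_mem_siegelDisk hW),
    fun Ω hΩ ζ => cayley_cayleyInv (Ω, ζ) (isUnit_add_I_smul_one_of_mem_siegelHalf hΩ)⟩
end
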